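/- Fix α ∈ (0,2], M > 0 and d ≥ 1, and let p_t^M(x,y) = (2π)^{−d} ∫_{ℝ^d} exp(i (x−y)·ξ) · exp(−t·((M^{2/α} + ‖ξ‖²)^{α/2} − M)) dξ. Then (2π)^d · p_t^M(x,y) has modulus at most ∫_{A₁} exp(−(α t / (2 (2M^{2/α})^{1−α/2})) ‖ξ‖²) dξ + ∫_{A₂} exp(−(α t / 2^{2−α/2}) ‖ξ‖^α) dξ, where A₁ = {ξ ∈ ℝ^d : ‖ξ‖² ≤ M^{2/α}} and A₂ = {ξ ∈ ℝ^d : ‖ξ‖² > M^{2/α}}, for every t > 0 and x, y ∈ ℝ^d. -/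

import Mathlib

/-!
The modulus of the integrand is `exp (-t Φ(‖ξ‖²))` with `Φ(r) = (m + r)^{α/2} - M`, `m = M^{2/α}`,
so `M = m^{α/2}`. Concavity of `r ↦ r^{α/2}` gives `Φ(r) ≥ (α/2) (m + r)^{α/2 - 1} r`, and as
`α/2 - 1 ≤ 0` the factor `m + r` may be replaced by any larger number: by `2m` when `r ≤ m`,
which gives the Gaussian bound, and by `2r` when `r > m`, which gives the `α`-stable bound.
-/

open MeasureTheory

lemma mul_rpow_sub_one_mul_le_rpow_add_sub_rpow {p a r u : ℝ} (hp0 : 0 ≤ p) (hp1 : p ≤ 1)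
    (ha : 0 ≤ a) (hr : 0 ≤ r) (har : 0 < a + r) (hu : a + r ≤ u) :
    p * u ^ (p - 1) * r ≤ (a + r) ^ p - a ^ p := by
  have hbern : (a / (a + r)) ^ p ≤ 1 + p * (a / (a + r) - 1) := by
    simpa using rpow_one_add_le_one_add_mul_self
      (by linarith [div_nonneg ha har.le] : -1 ≤ a / (a + r) - 1) hp0 hp1
  have hsecant : p * (a + r) ^ (p - 1) * r ≤ (a + r) ^ p - a ^ p := by
    rw [Real.div_rpow ha har.le, div_le_iff₀ (by positivity)] at hbern
    have hexpand : (1 + p * (a / (a + r) - 1)) * (a + r) ^ p =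
        (a + r) ^ p - p * (a + r) ^ (p - 1) * r := by
      rw [Real.rpow_sub_one har.ne']
      field_simp
      ring
    linarith
  calc p * u ^ (p - 1) * r ≤ p * (a + r) ^ (p - 1) * r := by
        gcongr p * ?_ * r
        exact Real.rpow_le_rpow_of_nonpos har hu (by linarith)
    _ ≤ _ := hsecant

lemma integrable_exp_neg_mul_norm_rpow {E : Type*} [NormedAddCommGroup E] [NormedSpace ℝ E]
    [FiniteDimensional ℝ E] [MeasurableSpace E] [BorelSpace E] (μ : Measure E)
    [μ.IsAddHaarMeasure] {b p : ℝ} (hb : 0 < b) (hp : 0 < p) :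
    Integrable (fun x : E ↦ Real.exp (-b * ‖x‖ ^ p)) μ := by
  rcases subsingleton_or_nontrivial E with hE | hE
  · exact Integrable.of_finite
  rw [integrable_fun_norm_addHaar μ (f := fun y ↦ Real.exp (-b * y ^ p))]
  refine (integrableOn_rpow_mul_exp_neg_mul_rpow (s := (Module.finrank ℝ E - 1 : ℕ))
    (neg_one_lt_zero.trans_le (Nat.cast_nonneg _)) hp hb).congr_fun
    (fun y _ ↦ ?_) measurableSet_Ioi
  simp [Real.rpow_natCast]

lemma norm_integral_le_setIntegral_add_setIntegral_compl {X F : Type*} [MeasurableSpace X]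
    [NormedAddCommGroup F] [NormedSpace ℝ F] {μ : Measure X} {f : X → F} {g₁ g₂ : X → ℝ}
    {s : Set X} (hs : MeasurableSet s) (hg₁ : IntegrableOn g₁ s μ) (hg₂ : IntegrableOn g₂ sᶜ μ)
    (hf₁ : ∀ x ∈ s, ‖f x‖ ≤ g₁ x) (hf₂ : ∀ x ∉ s, ‖f x‖ ≤ g₂ x) :
    ‖∫ x, f x ∂μ‖ ≤ ∫ x in s, g₁ x ∂μ + ∫ x in sᶜ, g₂ x ∂μ := by
  classical
  rw [← integral_piecewise hs hg₁ hg₂]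
  refine norm_integral_le_of_norm_le (Integrable.piecewise hs hg₁ hg₂) (.of_forall fun x ↦ ?_)
  by_cases hx : x ∈ s
  · simpa [hx] using hf₁ x hx
  · simpa [hx] using hf₂ x hx

lemma rpow_two_div_rpow_div_two {α M : ℝ} (hα : 0 < α) (hM : 0 < M) :
    (M ^ (2 / α)) ^ (α / 2) = M := by
  rw [← inv_div 2 α]
  exact Real.rpow_rpow_inv hM.le (by positivity)

lemma mul_div_le_rpow_add_sub_of_le {α M r : ℝ} (hα0 : 0 < α) (hα2 : α ≤ 2) (hM : 0 < M)
    (hr0 : 0 ≤ r) (hr : r ≤ M ^ (2 / α)) :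
    α * r / (2 * (2 * M ^ (2 / α)) ^ (1 - α / 2)) ≤ (M ^ (2 / α) + r) ^ (α / 2) - M := by
  have hm : 0 < M ^ (2 / α) := by positivity
  calc α * r / (2 * (2 * M ^ (2 / α)) ^ (1 - α / 2))
      = α / 2 * (2 * M ^ (2 / α)) ^ (α / 2 - 1) * r := by
        rw [show α / 2 - 1 = -(1 - α / 2) by ring, Real.rpow_neg (by positivity)]
        field_simp
    _ ≤ (M ^ (2 / α) + r) ^ (α / 2) - (M ^ (2 / α)) ^ (α / 2) :=
        mul_rpow_sub_one_mul_le_rpow_add_sub_rpow (by positivity) (by linarith) hm.le hr0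
          (by positivity) (by linarith)
    _ = (M ^ (2 / α) + r) ^ (α / 2) - M := by rw [rpow_two_div_rpow_div_two hα0 hM]

lemma mul_rpow_div_le_rpow_add_sub_of_lt {α M r : ℝ} (hα0 : 0 < α) (hα2 : α ≤ 2) (hM : 0 < M)
    (hr : M ^ (2 / α) < r) :
    α * r ^ (α / 2) / 2 ^ (2 - α / 2) ≤ (M ^ (2 / α) + r) ^ (α / 2) - M := by
  have hm : 0 < M ^ (2 / α) := by positivity
  have hr0 : 0 < r := hm.trans hr
  calc α * r ^ (α / 2) / 2 ^ (2 - α / 2)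
      = α / 2 * (2 * r) ^ (α / 2 - 1) * r := by
        rw [Real.mul_rpow zero_le_two hr0.le, Real.rpow_sub_one two_ne_zero,
          Real.rpow_sub_one hr0.ne', Real.rpow_sub two_pos, Real.rpow_two]
        field_simp
    _ ≤ (M ^ (2 / α) + r) ^ (α / 2) - (M ^ (2 / α)) ^ (α / 2) :=
        mul_rpow_sub_one_mul_le_rpow_add_sub_rpow (by positivity) (by linarith) hm.le hr0.le
          (by positivity) (by linarith)
    _ = (M ^ (2 / α) + r) ^ (α / 2) - M := by rw [rpow_two_div_rpow_div_two hα0 hM]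

lemma norm_cexp_I_mul_mul_cexp_neg (θ s : ℝ) :
    ‖Complex.exp (Complex.I * θ) * Complex.exp (-(s : ℂ))‖ = Real.exp (-s) := by
  simp [Complex.norm_exp]

theorem stmt7_general (α M : ℝ) (hα0 : 0 < α) (hα2 : α ≤ 2) (hM : 0 < M)
    (d : ℕ) (t : ℝ) (ht : 0 < t)
    (x y : EuclideanSpace ℝ (Fin d)) (p : ℂ)
    (hp : p = ((((2 * Real.pi) ^ d)⁻¹ : ℝ) : ℂ) *
        ∫ ξ : EuclideanSpace ℝ (Fin d),
          Complex.exp (Complex.I * ((inner ℝ (x - y) ξ : ℝ) : ℂ)) *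
            Complex.exp (-(((t * ((M ^ (2 / α) + ‖ξ‖ ^ 2) ^ (α / 2) - M)) : ℝ) : ℂ))) :
    ‖((((2 * Real.pi) ^ d : ℝ)) : ℂ) * p‖ ≤
      (∫ ξ in {ξ : EuclideanSpace ℝ (Fin d) | ‖ξ‖ ^ 2 ≤ M ^ (2 / α)},
          Real.exp (-(α * t / (2 * (2 * M ^ (2 / α)) ^ (1 - α / 2))) * ‖ξ‖ ^ 2)) +
      ∫ ξ in {ξ : EuclideanSpace ℝ (Fin d) | ‖ξ‖ ^ 2 > M ^ (2 / α)},
          Real.exp (-(α * t / (2 : ℝ) ^ (2 - α / 2)) * ‖ξ‖ ^ α) := by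
  have hcompl : {ξ : EuclideanSpace ℝ (Fin d) | ‖ξ‖ ^ 2 > M ^ (2 / α)} =
      {ξ | ‖ξ‖ ^ 2 ≤ M ^ (2 / α)}ᶜ := by
    ext; simp
  rw [hp, ← mul_assoc, ← Complex.ofReal_mul, mul_inv_cancel₀ (by positivity),
    Complex.ofReal_one, one_mul, hcompl]
  refine norm_integral_le_setIntegral_add_setIntegral_compl
    (measurableSet_le (by fun_prop) measurable_const) ?_ ?_ (fun ξ hξ ↦ ?_) (fun ξ hξ ↦ ?_)
  · simpa only [Real.rpow_two] using
      (integrable_exp_neg_mul_norm_rpow volume (by positivity) two_pos).integrableOn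
  · exact (integrable_exp_neg_mul_norm_rpow volume (by positivity) hα0).integrableOn
  · rw [norm_cexp_I_mul_mul_cexp_neg, Real.exp_le_exp, neg_mul, neg_le_neg_iff]
    exact le_of_eq_of_le (by ring) (mul_le_mul_of_nonneg_left
      (mul_div_le_rpow_add_sub_of_le hα0 hα2 hM (by positivity) hξ) ht.le)
  · have hξ : M ^ (2 / α) < ‖ξ‖ ^ 2 := not_le.mp hξ
    have hnorm : (‖ξ‖ ^ 2) ^ (α / 2) = ‖ξ‖ ^ α := by
      rw [← Real.rpow_natCast_mul (norm_nonneg ξ)]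
      norm_num [mul_div_cancel₀]
    rw [norm_cexp_I_mul_mul_cexp_neg, Real.exp_le_exp, neg_mul, neg_le_neg_iff, ← hnorm]
    exact le_of_eq_of_le (by ring) (mul_le_mul_of_nonneg_left
      (mul_rpow_div_le_rpow_add_sub_of_lt hα0 hα2 hM hξ) ht.le)

/-- The modulus of `(2π)^d · p_t^M(x,y)` is bounded by the sum of the Gaussian-regime
integral over `A₁ = {‖ξ‖² ≤ M^{2/α}}` and the α-stable-regime integral over
`A₂ = {‖ξ‖² > M^{2/α}}`. -/
theorem stmt7 (α M : ℝ) (hα0 : 0 < α) (hα2 : α ≤ 2) (hM : 0 < M)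
    (d : ℕ) (hd : 1 ≤ d) (t : ℝ) (ht : 0 < t)
    (x y : EuclideanSpace ℝ (Fin d)) (p : ℂ)
    (hp : p = ((((2 * Real.pi) ^ d)⁻¹ : ℝ) : ℂ) *
        ∫ ξ : EuclideanSpace ℝ (Fin d),
          Complex.exp (Complex.I * ((inner ℝ (x - y) ξ : ℝ) : ℂ)) *
            Complex.exp (-(((t * ((M ^ (2 / α) + ‖ξ‖ ^ 2) ^ (α / 2) - M)) : ℝ) : ℂ))) :
    ‖((((2 * Real.pi) ^ d : ℝ)) : ℂ) * p‖ ≤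
      (∫ ξ in {ξ : EuclideanSpace ℝ (Fin d) | ‖ξ‖ ^ 2 ≤ M ^ (2 / α)},
          Real.exp (-(α * t / (2 * (2 * M ^ (2 / α)) ^ (1 - α / 2))) * ‖ξ‖ ^ 2)) +
      ∫ ξ in {ξ : EuclideanSpace ℝ (Fin d) | ‖ξ‖ ^ 2 > M ^ (2 / α)},
          Real.exp (-(α * t / (2 : ℝ) ^ (2 - α / 2)) * ‖ξ‖ ^ α) :=
  stmt7_general α M hα0 hα2 hM d t ht x y p hp
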